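/- Double robustness of the MAR-efficient estimator (section 3.1): in the setting of the product-error bias decomposition for τ_a*, the bias E[ μ̃_MAR + 1{A=a}·(R+S)·(Y − μ̃_MAR)/D̃ ] − E[M_MAR] equals zero if μ̃_MAR = M_MAR almost everywhere, or if (π̃, γ̃, η̃) = (π, Γ, H) almost everywhere (more generally, if D̃ = D almost everywhere). -/

import Mathlib

open MeasureTheory

/-!
The candidate nuisances are functions of `L`, so conditioning on `L` lets them be pulled out
and replaces the observation indicator `W = 1{A=a}(R+S)` by its regression
`D = π(Γ + (1-Γ)H)` and `W Y` by `M_MAR D`. Hence the estimator has the same mean as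
`μ̃_MAR + (M_MAR - μ̃_MAR) D / D̃`, which equals `M_MAR` pointwise as soon as `μ̃_MAR = M_MAR`
or `D̃ = D`.
-/

theorem mul_eq_zero_or_eq_one {x y : ℝ} (hx : x = 0 ∨ x = 1) (hy : y = 0 ∨ y = 1) :
    x * y = 0 ∨ x * y = 1 := by
  rcases hx with rfl | rfl <;> simp [hy]

theorem norm_le_one_of_eq_zero_or_eq_one {x : ℝ} (hx : x = 0 ∨ x = 1) : ‖x‖ ≤ 1 := by
  rcases hx with rfl | rfl <;> simp

theorem add_eq_zero_or_eq_one_of_mul_eq_zero {x y : ℝ} (hx : x = 0 ∨ x = 1) (hy : y = 0 ∨ y = 1)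
    (hyx : y * x = 0) : x + y = 0 ∨ x + y = 1 := by
  rcases hx with rfl | rfl <;> rcases hy with rfl | rfl <;> simp_all

section CondExp

variable {Ω : Type*} {m m₀ : MeasurableSpace Ω} {μ : Measure Ω}

theorem integrable_of_eq_zero_or_eq_one [IsFiniteMeasure μ] {X : Ω → ℝ}
    (hX : Measurable X) (h01 : ∀ ω, X ω = 0 ∨ X ω = 1) : Integrable X μ :=
  .of_bound hX.aestronglyMeasurable 1
    (.of_forall fun ω => norm_le_one_of_eq_zero_or_eq_one (h01 ω))

theorem integral_add_mul_eq_integral_add_mul_condExp (hm : m ≤ m₀) [IsFiniteMeasure μ]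
    {h f g : Ω → ℝ} {c : ℝ} (hh : StronglyMeasurable[m] h) (hh_int : Integrable h μ)
    (hf : StronglyMeasurable[m] f) (hf_bound : ∀ᵐ ω ∂μ, ‖f ω‖ ≤ c) (hg : Integrable g μ) :
    ∫ ω, (h ω + f ω * g ω) ∂μ = ∫ ω, (h ω + f ω * μ[g | m] ω) ∂μ := by
  have hfg : Integrable (f * g) μ :=
    hg.bdd_mul ((hf.mono hm).aestronglyMeasurable) hf_bound
  have hcond : μ[h + f * g | m] =ᵐ[μ] h + f * μ[g | m] := by
    filter_upwards [condExp_add hh_int hfg m,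
      condExp_stronglyMeasurable_mul_of_bound hm hf hg c hf_bound] with ω hsum hpull
    rw [hsum, Pi.add_apply, hpull, condExp_of_stronglyMeasurable hm hh hh_int]
    rfl
  calc ∫ ω, (h ω + f ω * g ω) ∂μ = ∫ ω, μ[h + f * g | m] ω ∂μ := (integral_condExp hm).symm
    _ = ∫ ω, (h ω + f ω * μ[g | m] ω) ∂μ := integral_congr_ae hcond

theorem condExp_mul_sub_ae_eq (hm : m ≤ m₀) [IsFiniteMeasure μ] {W Y c : Ω → ℝ} {C : ℝ}
    (hc : StronglyMeasurable[m] c) (hc_bound : ∀ ω, ‖c ω‖ ≤ C)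
    (hW : Integrable W μ) (hWY : Integrable (fun ω => W ω * Y ω) μ) :
    μ[fun ω => W ω * (Y ω - c ω) | m]
      =ᵐ[μ] fun ω => μ[fun ω' => W ω' * Y ω' | m] ω - c ω * μ[W | m] ω := by
  have hsplit : (fun ω => W ω * (Y ω - c ω)) = (fun ω => W ω * Y ω) - c * W := by
    funext ω; simp only [Pi.sub_apply, Pi.mul_apply]; ring
  have hc_bound_ae : ∀ᵐ ω ∂μ, ‖c ω‖ ≤ C := .of_forall hc_bound
  have hcW : Integrable (c * W) μ := hW.bdd_mul (hc.mono hm).aestronglyMeasurable hc_bound_ae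
  rw [hsplit]
  filter_upwards [condExp_sub hWY hcW m,
    condExp_stronglyMeasurable_mul_of_bound hm hc hW C hc_bound_ae] with ω hsub hpull
  rw [hsub, Pi.sub_apply, hpull, Pi.mul_apply]

theorem condExp_mul_add_ae_eq {ind R S π Γ H : Ω → ℝ} (hind : Integrable ind μ)
    (hindR : Integrable (fun ω => ind ω * R ω) μ) (hindS : Integrable (fun ω => ind ω * S ω) μ)
    (hπ : μ[ind | m] =ᵐ[μ] π) (hΓ : μ[fun ω => ind ω * R ω | m] =ᵐ[μ] fun ω => Γ ω * π ω)
    (hH : μ[fun ω => ind ω * S ω | m]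
      =ᵐ[μ] fun ω => H ω * μ[fun ω' => ind ω' * (1 - R ω') | m] ω) :
    μ[fun ω => ind ω * (R ω + S ω) | m] =ᵐ[μ] fun ω => π ω * (Γ ω + (1 - Γ ω) * H ω) := by
  have hsum :
      (fun ω => ind ω * (R ω + S ω)) = (fun ω => ind ω * R ω) + fun ω => ind ω * S ω := by
    funext ω; simp only [Pi.add_apply]; ring
  have hcompl : (fun ω => ind ω * (1 - R ω)) = ind - fun ω => ind ω * R ω := by
    funext ω; simp only [Pi.sub_apply]; ring
  rw [hcompl] at hH
  rw [hsum]
  filter_upwards [condExp_add hindR hindS m, condExp_sub hind hindR m, hπ, hΓ, hH]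
    with ω hadd hsub hπω hΓω hHω
  rw [hadd, Pi.add_apply, hHω, hsub, Pi.sub_apply, hπω, hΓω]
  ring

theorem integral_add_mul_sub_div_eq (hm : m ≤ m₀) [IsFiniteMeasure μ]
    {W Y c Dt M D : Ω → ℝ} {C B ε : ℝ} (hε : 0 < ε)
    (hW : AEStronglyMeasurable W μ) (hW_bound : ∀ ω, ‖W ω‖ ≤ C) (hY : Integrable Y μ)
    (hc : Measurable[m] c) (hc_bound : ∀ ω, ‖c ω‖ ≤ B)
    (hDt : Measurable[m] Dt) (hDt_ge : ∀ᵐ ω ∂μ, ε ≤ Dt ω)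
    (hWD : μ[W | m] =ᵐ[μ] D)
    (hWY : μ[fun ω => W ω * Y ω | m] =ᵐ[μ] fun ω => M ω * μ[W | m] ω) :
    ∫ ω, (c ω + W ω * (Y ω - c ω) / Dt ω) ∂μ = ∫ ω, (c ω + (M ω - c ω) * D ω / Dt ω) ∂μ := by
  have hc_int : Integrable c μ :=
    .of_bound (hc.mono hm le_rfl).aestronglyMeasurable B (.of_forall hc_bound)
  have hW_bound_ae : ∀ᵐ ω ∂μ, ‖W ω‖ ≤ C := .of_forall hW_bound
  have hres : μ[fun ω => W ω * (Y ω - c ω) | m] =ᵐ[μ] fun ω => (M ω - c ω) * D ω := by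
    filter_upwards [condExp_mul_sub_ae_eq hm hc.stronglyMeasurable hc_bound
      (.of_bound hW C hW_bound_ae) (hY.bdd_mul hW hW_bound_ae), hWY, hWD] with ω hsub hM hD
    rw [hsub, hM, hD]
    ring
  have hDt_inv : ∀ᵐ ω ∂μ, ‖(Dt ω)⁻¹‖ ≤ ε⁻¹ := by
    filter_upwards [hDt_ge] with ω hεD
    rw [norm_inv, Real.norm_of_nonneg (hε.trans_le hεD).le]
    exact inv_anti₀ hε hεD
  have hWres : Integrable (fun ω => W ω * (Y ω - c ω)) μ :=
    (hY.sub hc_int).bdd_mul hW hW_bound_ae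
  simp_rw [div_eq_inv_mul]
  exact (integral_add_mul_eq_integral_add_mul_condExp hm hc.stronglyMeasurable hc_int
    hDt.inv.stronglyMeasurable hDt_inv hWres).trans
    (integral_congr_ae (by filter_upwards [hres] with ω h; rw [h, Pi.inv_apply]))

theorem integral_add_sub_mul_div_eq_of_or {c Dt M D : Ω → ℝ}
    (hrob : c =ᵐ[μ] M ∨ Dt =ᵐ[μ] D) (hDt : ∀ᵐ ω ∂μ, Dt ω ≠ 0) :
    ∫ ω, (c ω + (M ω - c ω) * D ω / Dt ω) ∂μ = ∫ ω, M ω ∂μ := by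
  refine integral_congr_ae ?_
  rcases hrob with hcM | hDtD
  · filter_upwards [hcM] with ω e
    rw [e, sub_self, zero_mul, zero_div, add_zero]
  · filter_upwards [hDtD, hDt] with ω e hne
    rw [← e, mul_div_assoc, div_self hne, mul_one, add_sub_cancel]

end CondExp

/-- Double robustness of the MAR-efficient estimator (section 3.1): the bias
`E[μ̃_MAR + 1{A=a}(R+S)(Y − μ̃_MAR)/D̃] − E[M_MAR]` vanishes if `μ̃_MAR = M_MAR`
a.e., or if `(π̃, γ̃, η̃) = (π, Γ, H)` a.e. (more generally, if `D̃ = D` a.e.). -/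
theorem double_robustness_tau_star
    {Ω : Type*} [MeasurableSpace Ω] (P : Measure Ω) [IsProbabilityMeasure P]
    {d : ℕ} (L : Ω → (Fin d → ℝ)) (A R S Y : Ω → ℝ)
    (hL : Measurable L) (hA : Measurable A) (hR : Measurable R)
    (hS : Measurable S) (hY : Integrable Y P)
    (hA01 : ∀ ω, A ω = 0 ∨ A ω = 1)
    (hR01 : ∀ ω, R ω = 0 ∨ R ω = 1)
    (hS01 : ∀ ω, S ω = 0 ∨ S ω = 1)
    (hSR : ∀ ω, S ω * R ω = 0)
    (a : ℝ) (ha : a = 0 ∨ a = 1)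
    (𝓛 : MeasurableSpace Ω) (h𝓛 : 𝓛 = MeasurableSpace.comap L inferInstance)
    (ind : Ω → ℝ) (hind : ind = fun ω => if A ω = a then (1:ℝ) else 0)
    -- arm-a nuisance random variables
    (π Γ H M_MAR : Ω → ℝ)
    (hπ_meas : Measurable[𝓛] π) (hπ_int : Integrable π P)
    (hΓ_meas : Measurable[𝓛] Γ) (hΓ_int : Integrable Γ P)
    (hH_meas : Measurable[𝓛] H) (hH_int : Integrable H P)
    (hMMAR_meas : Measurable[𝓛] M_MAR) (hMMAR_int : Integrable M_MAR P)
    (hπ01 : ∀ ω, 0 ≤ π ω ∧ π ω ≤ 1)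
    (hΓ01 : ∀ ω, 0 ≤ Γ ω ∧ Γ ω ≤ 1)
    (hH01 : ∀ ω, 0 ≤ H ω ∧ H ω ≤ 1)
    -- characterizations
    (hπ : P[ind | 𝓛] =ᵐ[P] π)
    (hΓ : P[fun ω => ind ω * R ω | 𝓛] =ᵐ[P] fun ω => Γ ω * π ω)
    (hH : P[fun ω => ind ω * S ω | 𝓛]
      =ᵐ[P] fun ω => H ω * (P[fun ω' => ind ω' * (1 - R ω') | 𝓛]) ω)
    (hMMAR : P[fun ω => ind ω * (R ω + S ω) * Y ω | 𝓛]
      =ᵐ[P] fun ω => M_MAR ω * (P[fun ω' => ind ω' * (R ω' + S ω') | 𝓛]) ω)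
    -- true and candidate denominators, with positivity
    (ε : ℝ) (hε : 0 < ε)
    (D : Ω → ℝ) (hDdef : D = fun ω => π ω * (Γ ω + (1 - Γ ω) * H ω))
    (hDpos : ∀ᵐ ω ∂P, ε ≤ D ω)
    -- candidate (possibly misspecified) nuisances
    (πt ηt γt μtM : Ω → ℝ)
    (hπt_meas : Measurable[𝓛] πt) (hηt_meas : Measurable[𝓛] ηt)
    (hγt_meas : Measurable[𝓛] γt) (hμtM_meas : Measurable[𝓛] μtM)
    (hπt_bdd : ∃ B, ∀ ω, |πt ω| ≤ B) (hηt_bdd : ∃ B, ∀ ω, |ηt ω| ≤ B)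
    (hμtM_bdd : ∃ B, ∀ ω, |μtM ω| ≤ B)
    (hγt01 : ∀ ω, 0 ≤ γt ω ∧ γt ω ≤ 1)
    (Dt : Ω → ℝ) (hDtdef : Dt = fun ω => πt ω * (γt ω + (1 - γt ω) * ηt ω))
    (hDtpos : ∀ᵐ ω ∂P, ε ≤ Dt ω)
    -- any one of the robustness conditions
    (hrob : (μtM =ᵐ[P] M_MAR)
      ∨ (πt =ᵐ[P] π ∧ γt =ᵐ[P] Γ ∧ ηt =ᵐ[P] H)
      ∨ (Dt =ᵐ[P] D)) :
    ∫ ω, (μtM ω + ind ω * (R ω + S ω) * (Y ω - μtM ω) / Dt ω) ∂P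
      - ∫ ω, M_MAR ω ∂P = 0 := by
  -- `𝓛` is a local instance, so the ambient σ-algebra has to be named to be referred to.
  rename_i mΩ _
  have hm : 𝓛 ≤ mΩ := h𝓛 ▸ hL.comap_le
  have hind_meas : Measurable[mΩ] ind :=
    hind ▸ Measurable.ite (hA (measurableSet_singleton a)) measurable_const measurable_const
  have hind01 : ∀ ω, ind ω = 0 ∨ ind ω = 1 := fun ω => by
    simp only [hind]; split_ifs <;> simp
  have hW01 : ∀ ω, ind ω * (R ω + S ω) = 0 ∨ ind ω * (R ω + S ω) = 1 := fun ω =>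
    mul_eq_zero_or_eq_one (hind01 ω)
      (add_eq_zero_or_eq_one_of_mul_eq_zero (hR01 ω) (hS01 ω) (hSR ω))
  have hWD : P[fun ω => ind ω * (R ω + S ω) | 𝓛] =ᵐ[P] D := hDdef ▸
    condExp_mul_add_ae_eq (integrable_of_eq_zero_or_eq_one hind_meas hind01)
      (integrable_of_eq_zero_or_eq_one (hind_meas.mul hR)
        fun ω => mul_eq_zero_or_eq_one (hind01 ω) (hR01 ω))
      (integrable_of_eq_zero_or_eq_one (hind_meas.mul hS)
        fun ω => mul_eq_zero_or_eq_one (hind01 ω) (hS01 ω)) hπ hΓ hH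
  have hDt_meas : Measurable[𝓛] Dt :=
    hDtdef ▸ hπt_meas.mul (hγt_meas.add ((measurable_const.sub hγt_meas).mul hηt_meas))
  have hDt_or : μtM =ᵐ[P] M_MAR ∨ Dt =ᵐ[P] D := by
    rcases hrob with hμ | ⟨hπt, hγt, hηt⟩ | hD
    · exact .inl hμ
    · refine .inr ?_
      filter_upwards [hπt, hγt, hηt] with ω e1 e2 e3
      simp only [hDtdef, hDdef, e1, e2, e3]
    · exact .inr hD
  obtain ⟨B, hB⟩ := hμtM_bdd
  rw [sub_eq_zero]
  exact (integral_add_mul_sub_div_eq hm hε (hind_meas.mul (hR.add hS)).aestronglyMeasurable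
    (fun ω => norm_le_one_of_eq_zero_or_eq_one (hW01 ω)) hY hμtM_meas hB
    hDt_meas hDtpos hWD hMMAR).trans
    (integral_add_sub_mul_div_eq_of_or hDt_or (hDtpos.mono fun ω h => (hε.trans_le h).ne'))
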